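/- Let 𝔐 be a weight sequence system on ℝ^d satisfying (L) and (𝔐.2)', and let 𝒲 be a weight function system on ℝ^d satisfying (wM) and (N). Suppose (φ_n)_{n∈ℕ} is a sequence of smooth functions ℝ^d → ℂ such that for every λ > 0 there exists C > 0 such that ‖∑_{n=0}^k c_n φ_n‖_{𝒮^{M^λ}_{w^λ,∞}} ≤ C for every k ∈ ℕ and all complex numbers c_0, …, c_k with |c_n| ≤ 1. Then for every μ > 0 one has ∑_{n=0}^∞ ‖φ_n‖_{𝒮^{M^μ}_{w^μ,1}} < ∞. (Thus every weakly summable sequence in 𝒮^{(𝔐)}_{(𝒲),∞} is absolutely summable, which by Grothendieck's criterion yields the nuclearity of 𝒮^{(𝔐)}_{(𝒲)}.) -/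

import Mathlib

open MeasureTheory Filter ENNReal Asymptotics

noncomputable section

/-- Partial derivative in the `i`-th coordinate direction. -/
def pd (d : ℕ) (i : Fin d) (f : EuclideanSpace ℝ (Fin d) → ℂ) :
    EuclideanSpace ℝ (Fin d) → ℂ :=
  fun x => fderiv ℝ f x (EuclideanSpace.single i 1)

/-- Iterated partial derivative in the `i`-th coordinate direction. -/
def pdPow (d : ℕ) (i : Fin d) :
    ℕ → (EuclideanSpace ℝ (Fin d) → ℂ) → EuclideanSpace ℝ (Fin d) → ℂ
  | 0, f => f
  | n + 1, f => pd d i (pdPow d i n f)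

/-- Mixed partial derivative `∂^α` for a multi-index `α : Fin d → ℕ`. -/
def pdMulti (d : ℕ) (α : Fin d → ℕ) (f : EuclideanSpace ℝ (Fin d) → ℂ) :
    EuclideanSpace ℝ (Fin d) → ℂ :=
  (List.finRange d).foldr (fun i g => pdPow d i (α i) g) f

/-- The Gelfand–Shilov seminorm `‖φ‖_{𝒮^M_{w,q}}`, as an `ℝ≥0∞`-valued quantity:
`sup_α ‖(∂^α φ)·w‖_{L^q} / M_α`. -/
def gsNorm (d : ℕ) (M : (Fin d → ℕ) → ℝ) (w : EuclideanSpace ℝ (Fin d) → ℝ)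
    (q : ℝ≥0∞) (φ : EuclideanSpace ℝ (Fin d) → ℂ) : ℝ≥0∞ :=
  ⨆ α : Fin d → ℕ,
    eLpNorm (fun x => ‖pdMulti d α φ x‖ * w x) q volume / ENNReal.ofReal (M α)

/-- The lattice point of `ℤ^d` inside `ℝ^d`. -/
def intPt (d : ℕ) (j : Fin d → ℤ) : EuclideanSpace ℝ (Fin d) :=
  (WithLp.equiv 2 (Fin d → ℝ)).symm fun i => (j i : ℝ)

/-- The associated function `ω_M(x) = sup_α log (|x^α| M_0 / M_α)` of a (multi-indexed)
sequence `M`. -/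
def assocFun (d : ℕ) (M : (Fin d → ℕ) → ℝ) (x : EuclideanSpace ℝ (Fin d)) : ℝ :=
  ⨆ α : Fin d → ℕ, Real.log ((∏ i, |x i| ^ α i) * M 0 / M α)

/-- `w` is a weight function system on `ℝ^d`: each `w λ` (for `λ > 0`) is continuous, `≥ 1`,
and `w λ ≤ w μ` pointwise whenever `μ ≤ λ`. -/
structure IsWFS (d : ℕ) (w : ℝ → EuclideanSpace ℝ (Fin d) → ℝ) : Prop where
  cont : ∀ l, 0 < l → Continuous (w l)
  one_le : ∀ l, 0 < l → ∀ x, 1 ≤ w l x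
  mono : ∀ m l, 0 < m → m ≤ l → ∀ x, w l x ≤ w m x

/-- Condition (wM) (Beurling) for a weight function system. -/
def WFS_wM_B (d : ℕ) (w : ℝ → EuclideanSpace ℝ (Fin d) → ℝ) : Prop :=
  ∀ l, 0 < l → ∃ m, 0 < m ∧ ∃ C, 0 < C ∧
    ∀ x y : EuclideanSpace ℝ (Fin d), ‖y‖ ≤ 1 → w l (x + y) ≤ C * w m x

/-- Condition {wM} (Roumieu) for a weight function system. -/
def WFS_wM_R (d : ℕ) (w : ℝ → EuclideanSpace ℝ (Fin d) → ℝ) : Prop :=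
  ∀ m, 0 < m → ∃ l, 0 < l ∧ ∃ C, 0 < C ∧
    ∀ x y : EuclideanSpace ℝ (Fin d), ‖y‖ ≤ 1 → w l (x + y) ≤ C * w m x

/-- Condition (M) (Beurling) for a weight function system. -/
def WFS_M_B (d : ℕ) (w : ℝ → EuclideanSpace ℝ (Fin d) → ℝ) : Prop :=
  ∀ l, 0 < l → ∃ m, 0 < m ∧ ∃ n, 0 < n ∧ ∃ C, 0 < C ∧
    ∀ x y : EuclideanSpace ℝ (Fin d), w l (x + y) ≤ C * w m x * w n y

/-- Condition (N) (Beurling) for a weight function system. -/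
def WFS_N_B (d : ℕ) (w : ℝ → EuclideanSpace ℝ (Fin d) → ℝ) : Prop :=
  ∀ l, 0 < l → ∃ m, 0 < m ∧ Integrable (fun x => w l x / w m x) volume

/-- Condition {N} (Roumieu) for a weight function system. -/
def WFS_N_R (d : ℕ) (w : ℝ → EuclideanSpace ℝ (Fin d) → ℝ) : Prop :=
  ∀ m, 0 < m → ∃ l, 0 < l ∧ Integrable (fun x => w l x / w m x) volume

/-- `M` is a weight sequence system on `ℝ^d`: each `M λ` (for `λ > 0`) is a positive
sequence with `(M^λ_α)^{1/|α|} → ∞` satisfying the log-convexity condition (M.1), and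
`M^λ_α ≤ M^μ_α` whenever `λ ≤ μ`. -/
structure IsWSS (d : ℕ) (M : ℝ → (Fin d → ℕ) → ℝ) : Prop where
  pos : ∀ l, 0 < l → ∀ α, 0 < M l α
  growth : ∀ l, 0 < l → ∀ R : ℝ, 0 < R → ∃ N : ℕ, ∀ α : Fin d → ℕ,
    N ≤ ∑ i, α i → R ^ (∑ i, α i) ≤ M l α
  logconvex : ∀ l, 0 < l → ∀ (α : Fin d → ℕ) (j : Fin d),
    M l (α + Pi.single j 1) ^ 2 ≤ M l α * M l (α + Pi.single j 2)
  mono : ∀ l m, 0 < l → l ≤ m → ∀ α, M l α ≤ M m α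

/-- Condition (L) (Beurling) for a weight sequence system. -/
def WSS_L_B (d : ℕ) (M : ℝ → (Fin d → ℕ) → ℝ) : Prop :=
  ∀ R : ℝ, 0 < R → ∀ l, 0 < l → ∃ m, 0 < m ∧ ∃ C, 0 < C ∧
    ∀ α : Fin d → ℕ, R ^ (∑ i, α i) * M m α ≤ C * M l α

/-- Condition {L} (Roumieu) for a weight sequence system. -/
def WSS_L_R (d : ℕ) (M : ℝ → (Fin d → ℕ) → ℝ) : Prop :=
  ∀ R : ℝ, 0 < R → ∀ m, 0 < m → ∃ l, 0 < l ∧ ∃ C, 0 < C ∧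
    ∀ α : Fin d → ℕ, R ^ (∑ i, α i) * M m α ≤ C * M l α

/-- Condition (𝔐.2)' (Beurling) for a weight sequence system. -/
def WSS_M2_B (d : ℕ) (M : ℝ → (Fin d → ℕ) → ℝ) : Prop :=
  ∀ l, 0 < l → ∃ m, 0 < m ∧ ∃ C, 0 < C ∧ ∃ H, 0 < H ∧
    ∀ (α : Fin d → ℕ) (j : Fin d),
      M m (α + Pi.single j 1) ≤ C * H ^ (∑ i, α i) * M l α

/-- Condition {𝔐.2}' (Roumieu) for a weight sequence system. -/
def WSS_M2_R (d : ℕ) (M : ℝ → (Fin d → ℕ) → ℝ) : Prop :=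
  ∀ m, 0 < m → ∃ l, 0 < l ∧ ∃ C, 0 < C ∧ ∃ H, 0 < H ∧
    ∀ (α : Fin d → ℕ) (j : Fin d),
      M l (α + Pi.single j 1) ≤ C * H ^ (∑ i, α i) * M m α

/-- A weight sequence system is accelerating if `M^λ_{α+e_j}/M^λ_α ≤ M^μ_{α+e_j}/M^μ_α`
for `λ ≤ μ`. -/
def WSSAccel (d : ℕ) (M : ℝ → (Fin d → ℕ) → ℝ) : Prop :=
  ∀ l m, 0 < l → l ≤ m → ∀ (α : Fin d → ℕ) (j : Fin d),
    M l (α + Pi.single j 1) / M l α ≤ M m (α + Pi.single j 1) / M m α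

/-- A weight sequence system is isotropically decomposable: there is a partition of the `d`
coordinates into `k` blocks (equivalently, after a permutation of the coordinates, a
decomposition `ℕ^d = ℕ^{d_1} × ⋯ × ℕ^{d_k}`) and positive functions `m^λ_j : ℕ → (0,∞)` with
`M^λ_α = ∏_j m^λ_j (|α^{(j)}|)`. -/
def IsoDecomposable (d : ℕ) (M : ℝ → (Fin d → ℕ) → ℝ) : Prop :=
  ∃ (k : ℕ) (b : Fin d → Fin k) (m : ℝ → Fin k → ℕ → ℝ),
    (∀ l, 0 < l → ∀ j n, 0 < m l j n) ∧
    ∀ l, 0 < l → ∀ α : Fin d → ℕ,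
      M l α = ∏ j, m l j (∑ i ∈ Finset.univ.filter fun i => b i = j, α i)

/-- Membership in the Beurling Gelfand–Shilov class `𝒮^{(𝔐)}_{(𝒲),q}`. -/
def gsBeurling (d : ℕ) (M : ℝ → (Fin d → ℕ) → ℝ) (w : ℝ → EuclideanSpace ℝ (Fin d) → ℝ)
    (q : ℝ≥0∞) (φ : EuclideanSpace ℝ (Fin d) → ℂ) : Prop :=
  ContDiff ℝ (⊤ : ℕ∞) φ ∧ ∀ l, 0 < l → gsNorm d (M l) (w l) q φ < ⊤

/-- Membership in the Roumieu Gelfand–Shilov class `𝒮^{{𝔐}}_{{𝒲},q}`. -/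
def gsRoumieu (d : ℕ) (M : ℝ → (Fin d → ℕ) → ℝ) (w : ℝ → EuclideanSpace ℝ (Fin d) → ℝ)
    (q : ℝ≥0∞) (φ : EuclideanSpace ℝ (Fin d) → ℂ) : Prop :=
  ContDiff ℝ (⊤ : ℕ∞) φ ∧ ∃ l, 0 < l ∧ gsNorm d (M l) (w l) q φ < ⊤

/-- Membership in the auxiliary space `𝒮̃^{(𝔐)}_{(𝒲)}`. -/
def gsTilde (d : ℕ) (M : ℝ → (Fin d → ℕ) → ℝ) (w : ℝ → EuclideanSpace ℝ (Fin d) → ℝ)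
    (ψ : EuclideanSpace ℝ (Fin d) → ℂ) : Prop :=
  ContDiff ℝ (⊤ : ℕ∞) ψ ∧ ∀ l, 0 < l → ∀ k : ℕ, ∃ C : ℝ,
    ∀ (α : Fin d → ℕ) (x : EuclideanSpace ℝ (Fin d)),
      ‖pdMulti d α ψ x‖ * (1 + ‖x‖) ^ k * w l x / M l α ≤ C

end

/-!
Testing the weak bound with the unimodular coefficients `c_n = conj(∂^α φ_n(x)) / |∂^α φ_n(x)|`
gives `∑_n |∂^α φ_n(x)| w^λ(x) ≤ C M^λ_α` at every point `x`; the `L^∞` bound holds everywhere,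
not only almost everywhere, because all functions involved are continuous. Dividing by `w^λ` and
integrating against `w^μ`, condition (N) bounds `∑_n ‖(∂^α φ_n) w^μ‖_{L¹}` by
`C M^λ_α ∫ w^μ / w^λ`, and (L) with `R = 2` turns `M^λ_α` into `C' 2^{-|α|} M^μ_α`. The supremum
over `α` in the `n`-th seminorm is then dominated by a sum over `α` that converges geometrically.
-/

section PartialDerivatives

variable {d : ℕ}

theorem contDiff_pd (i : Fin d) {f : EuclideanSpace ℝ (Fin d) → ℂ}
    (hf : ContDiff ℝ (⊤ : ℕ∞) f) : ContDiff ℝ (⊤ : ℕ∞) (pd d i f) :=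
  (hf.fderiv_right (by exact_mod_cast le_top)).clm_apply contDiff_const

theorem contDiff_pdPow (i : Fin d) (k : ℕ) {f : EuclideanSpace ℝ (Fin d) → ℂ}
    (hf : ContDiff ℝ (⊤ : ℕ∞) f) : ContDiff ℝ (⊤ : ℕ∞) (pdPow d i k f) := by
  induction k with
  | zero => exact hf
  | succ k ih => exact contDiff_pd i ih

theorem contDiff_foldr_pdPow (L : List (Fin d)) (α : Fin d → ℕ)
    {f : EuclideanSpace ℝ (Fin d) → ℂ} (hf : ContDiff ℝ (⊤ : ℕ∞) f) :
    ContDiff ℝ (⊤ : ℕ∞) (L.foldr (fun i g => pdPow d i (α i) g) f) := by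
  induction L with
  | nil => exact hf
  | cons i L ih => exact contDiff_pdPow i _ ih

theorem contDiff_pdMulti (α : Fin d → ℕ) {f : EuclideanSpace ℝ (Fin d) → ℂ}
    (hf : ContDiff ℝ (⊤ : ℕ∞) f) : ContDiff ℝ (⊤ : ℕ∞) (pdMulti d α f) :=
  contDiff_foldr_pdPow _ α hf

variable {ι : Type*} (s : Finset ι) (c : ι → ℂ) {f : ι → EuclideanSpace ℝ (Fin d) → ℂ}

theorem pd_finset_sum (i : Fin d) (hf : ∀ n ∈ s, Differentiable ℝ (f n)) :
    pd d i (fun x => ∑ n ∈ s, c n * f n x) = fun x => ∑ n ∈ s, c n * pd d i (f n) x := by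
  funext x
  have hdiff : ∀ n ∈ s, DifferentiableAt ℝ (fun y => c n * f n y) x :=
    fun n hn => (hf n hn x).const_mul _
  simp only [pd, fderiv_fun_sum hdiff, FunLike.coe_sum, Finset.sum_apply]
  refine Finset.sum_congr rfl fun n hn => ?_
  simp [fderiv_const_mul (hf n hn x)]

theorem pdPow_finset_sum (i : Fin d) (k : ℕ) (hf : ∀ n ∈ s, ContDiff ℝ (⊤ : ℕ∞) (f n)) :
    pdPow d i k (fun x => ∑ n ∈ s, c n * f n x)
      = fun x => ∑ n ∈ s, c n * pdPow d i k (f n) x := by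
  induction k with
  | zero => rfl
  | succ k ih =>
    rw [pdPow, ih]
    exact pd_finset_sum s c i fun n hn => (contDiff_pdPow i k (hf n hn)).differentiable (by simp)

theorem foldr_pdPow_finset_sum (L : List (Fin d)) (α : Fin d → ℕ)
    (hf : ∀ n ∈ s, ContDiff ℝ (⊤ : ℕ∞) (f n)) :
    L.foldr (fun i g => pdPow d i (α i) g) (fun x => ∑ n ∈ s, c n * f n x)
      = fun x => ∑ n ∈ s, c n * L.foldr (fun i g => pdPow d i (α i) g) (f n) x := by
  induction L with
  | nil => rfl
  | cons i L ih =>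
    rw [List.foldr_cons, ih]
    exact pdPow_finset_sum s c i (α i) fun n hn => contDiff_foldr_pdPow L α (hf n hn)

theorem pdMulti_finset_sum (α : Fin d → ℕ) (hf : ∀ n ∈ s, ContDiff ℝ (⊤ : ℕ∞) (f n)) :
    pdMulti d α (fun x => ∑ n ∈ s, c n * f n x) = fun x => ∑ n ∈ s, c n * pdMulti d α (f n) x :=
  foldr_pdPow_finset_sum s c _ α hf

end PartialDerivatives

theorem RCLike.sum_norm_le_of_forall_norm_sum_le {𝕜 ι : Type*} [RCLike 𝕜] (s : Finset ι)
    (a : ι → 𝕜) {B : ℝ} (h : ∀ c : ι → 𝕜, (∀ n ∈ s, ‖c n‖ ≤ 1) → ‖∑ n ∈ s, c n * a n‖ ≤ B) :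
    ∑ n ∈ s, ‖a n‖ ≤ B := by
  set c : ι → 𝕜 := fun n => starRingEnd 𝕜 (a n) / (‖a n‖ : 𝕜)
  have hc : ∀ n, ‖c n‖ ≤ 1 := fun n => by
    rcases eq_or_ne (a n) 0 with h0 | h0
    · simp [c, h0]
    · simp [c, norm_div, div_self (norm_ne_zero_iff.2 h0)]
  have hca : ∀ n, c n * a n = (‖a n‖ : 𝕜) := fun n => by
    rcases eq_or_ne (a n) 0 with h0 | h0
    · simp [h0]
    · have : (‖a n‖ : 𝕜) ≠ 0 := by exact_mod_cast norm_ne_zero_iff.2 h0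
      rw [div_mul_eq_mul_div, RCLike.conj_mul, sq, mul_div_cancel_right₀ _ this]
  calc ∑ n ∈ s, ‖a n‖ = ‖∑ n ∈ s, c n * a n‖ := by
        simp only [hca, ← RCLike.ofReal_sum, RCLike.norm_ofReal]
        exact (abs_of_nonneg (Finset.sum_nonneg fun n _ => norm_nonneg _)).symm
    _ ≤ B := h c fun n _ => hc n

theorem RCLike.tsum_enorm_le_of_forall_norm_sum_range_le {𝕜 : Type*} [RCLike 𝕜] (a : ℕ → 𝕜)
    {B : ℝ} (h : ∀ (k : ℕ) (c : ℕ → 𝕜), (∀ n, n ≤ k → ‖c n‖ ≤ 1) →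
      ‖∑ n ∈ Finset.range (k + 1), c n * a n‖ ≤ B) :
    ∑' n, ‖a n‖ₑ ≤ ENNReal.ofReal B := by
  refine ENNReal.tsum_le_of_sum_range_le fun k => ?_
  cases k with
  | zero => simp
  | succ k =>
    simp only [← ofReal_norm]
    rw [← ENNReal.ofReal_sum_of_nonneg fun n _ => norm_nonneg _]
    refine ENNReal.ofReal_le_ofReal (sum_norm_le_of_forall_norm_sum_le _ a fun c hc => ?_)
    exact h k c fun n hn => hc n (Finset.mem_range.2 (Nat.lt_succ_of_le hn))

theorem Continuous.norm_le_of_eLpNorm_top_le {X F : Type*} [TopologicalSpace X]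
    [MeasurableSpace X] {μ : Measure X} [μ.IsOpenPosMeasure] [NormedAddCommGroup F]
    {g : X → F} (hg : Continuous g) {B : ℝ} (hB : 0 ≤ B) (h : eLpNorm g ∞ μ ≤ ENNReal.ofReal B)
    (x : X) : ‖g x‖ ≤ B := by
  have hae : ∀ᵐ y ∂μ, ‖g y‖ ≤ B := by
    filter_upwards [ae_le_eLpNormEssSup (f := g) (μ := μ)] with y hy
    rw [← eLpNorm_exponent_top, ← ofReal_norm] at hy
    exact (ENNReal.ofReal_le_ofReal_iff hB).1 (hy.trans h)
  have hclosed : IsClosed {y | ‖g y‖ ≤ B} := isClosed_le hg.norm continuous_const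
  have : {y | ‖g y‖ ≤ B} = Set.univ := by
    rw [← hclosed.closure_eq, (Measure.dense_of_ae hae).closure_eq]
  exact Set.eq_univ_iff_forall.1 this x

theorem tsum_eLpNorm_one_mul_le {X : Type*} [TopologicalSpace X] [MeasurableSpace X]
    [OpensMeasurableSpace X] {μ : Measure X} [μ.IsOpenPosMeasure] {f : ℕ → X → ℂ}
    (hf : ∀ n, Continuous (f n)) {u v : X → ℝ} (hu : Continuous u) (hu_pos : ∀ x, 0 < u x)
    (hv : Measurable v) (hv_nonneg : ∀ x, 0 ≤ v x) {B : ℝ} (hB : 0 ≤ B)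
    (h : ∀ (k : ℕ) (c : ℕ → ℂ), (∀ n, n ≤ k → ‖c n‖ ≤ 1) →
      eLpNorm (fun x => ‖∑ n ∈ Finset.range (k + 1), c n * f n x‖ * u x) ∞ μ ≤
        ENNReal.ofReal B) :
    ∑' n, eLpNorm (fun x => ‖f n x‖ * v x) 1 μ ≤
      ENNReal.ofReal B * ∫⁻ x, ENNReal.ofReal (v x / u x) ∂μ := by
  have hpoint : ∀ x, ∑' n, ‖f n x‖ₑ ≤ ENNReal.ofReal (B / u x) := fun x =>
    RCLike.tsum_enorm_le_of_forall_norm_sum_range_le _ fun k c hc => by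
      rw [le_div_iff₀ (hu_pos x)]
      have hcont : Continuous fun y => ‖∑ n ∈ Finset.range (k + 1), c n * f n y‖ * u y := by
        fun_prop
      simpa [abs_of_pos (hu_pos x)] using hcont.norm_le_of_eLpNorm_top_le hB (h k c hc) x
  calc ∑' n, eLpNorm (fun x => ‖f n x‖ * v x) 1 μ
      = ∫⁻ x, (∑' n, ‖f n x‖ₑ) * ENNReal.ofReal (v x) ∂μ := by
        simp_rw [ENNReal.tsum_mul_right.symm]
        rw [lintegral_tsum fun n =>
          (by fun_prop : AEMeasurable (fun x => ‖f n x‖ₑ * ENNReal.ofReal (v x)) μ)]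
        refine tsum_congr fun n => ?_
        rw [eLpNorm_one_eq_lintegral_enorm]
        simp [enorm_mul, Real.enorm_eq_ofReal (hv_nonneg _)]
    _ ≤ ∫⁻ x, ENNReal.ofReal (B / u x) * ENNReal.ofReal (v x) ∂μ :=
        lintegral_mono fun x => mul_le_mul_left (hpoint x) _
    _ = ENNReal.ofReal B * ∫⁻ x, ENNReal.ofReal (v x / u x) ∂μ := by
        rw [← lintegral_const_mul' _ _ ENNReal.ofReal_ne_top]
        refine lintegral_congr fun x => ?_
        rw [← ENNReal.ofReal_mul (div_nonneg hB (hu_pos x).le), ← ENNReal.ofReal_mul hB]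
        ring_nf

theorem ENNReal.tsum_pow_sum_fin (d : ℕ) (r : ℝ≥0∞) :
    ∑' α : Fin d → ℕ, r ^ (∑ i, α i) = (∑' n : ℕ, r ^ n) ^ d := by
  induction d with
  | zero => simp
  | succ d ih =>
    have hcons : ∀ p : ℕ × (Fin d → ℕ),
        r ^ (∑ i, Fin.consEquiv (fun _ => ℕ) p i) = r ^ p.1 * r ^ (∑ i, p.2 i) := fun p => by
      simp [Fin.consEquiv, Fin.sum_univ_succ, pow_add]
    rw [← (Fin.consEquiv fun _ => ℕ).tsum_eq, tsum_congr hcons,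
      ENNReal.tsum_prod (f := fun n (β : Fin d → ℕ) => r ^ n * r ^ (∑ i, β i))]
    simp_rw [ENNReal.tsum_mul_left, ENNReal.tsum_mul_right, ih, pow_succ']

theorem ENNReal.tsum_iSup_lt_top_of_tsum_le_geometric {d : ℕ}
    (F : ℕ → (Fin d → ℕ) → ℝ≥0∞) {D r : ℝ≥0∞} (hD : D ≠ ∞) (hr : r < 1)
    (h : ∀ α, ∑' n, F n α ≤ D * r ^ (∑ i, α i)) : ∑' n, ⨆ α, F n α < ∞ :=
  calc ∑' n, ⨆ α, F n α ≤ ∑' n, ∑' α, F n α :=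
        ENNReal.tsum_le_tsum fun n => iSup_le fun α => ENNReal.le_tsum α
    _ = ∑' α, ∑' n, F n α := ENNReal.tsum_comm
    _ ≤ ∑' α : Fin d → ℕ, D * r ^ (∑ i, α i) := ENNReal.tsum_le_tsum h
    _ = D * ((1 - r)⁻¹) ^ d := by
        rw [ENNReal.tsum_mul_left, ENNReal.tsum_pow_sum_fin, ENNReal.tsum_geometric]
    _ < ∞ := ENNReal.mul_lt_top hD.lt_top
        (ENNReal.pow_lt_top (ENNReal.inv_lt_top.2 (tsub_pos_of_lt hr)))

section WeightSystems

variable {d : ℕ}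

theorem IsWFS.pos {w : ℝ → EuclideanSpace ℝ (Fin d) → ℝ} (hW : IsWFS d w) {l : ℝ} (hl : 0 < l)
    (x : EuclideanSpace ℝ (Fin d)) : 0 < w l x :=
  one_pos.trans_le (hW.one_le l hl x)

theorem IsWFS.lintegral_ofReal_div_ne_top {w : ℝ → EuclideanSpace ℝ (Fin d) → ℝ}
    (hW : IsWFS d w) {μ ν l : ℝ} (hμ : 0 < μ) (hν : 0 < ν) (hl : 0 < l) (hlν : l ≤ ν)
    (hint : Integrable (fun x => w μ x / w ν x)) :
    ∫⁻ x, ENNReal.ofReal (w μ x / w l x) ≠ ∞ := by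
  refine ne_top_of_le_ne_top hint.hasFiniteIntegral.ne (lintegral_mono fun x => ?_)
  refine (ENNReal.ofReal_le_ofReal ?_).trans (Real.ofReal_le_enorm _)
  exact div_le_div_of_nonneg_left (hW.pos hμ x).le (hW.pos hν x) (hW.mono l ν hl hlν x)

theorem IsWSS.le_mul_inv_pow_mul {M : ℝ → (Fin d → ℕ) → ℝ} (hM : IsWSS d M)
    {R C l m μ : ℝ} (hR : 0 < R) (hl : 0 < l) (hlm : l ≤ m)
    (h : ∀ α : Fin d → ℕ, R ^ (∑ i, α i) * M m α ≤ C * M μ α) (α : Fin d → ℕ) :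
    M l α ≤ C * R⁻¹ ^ (∑ i, α i) * M μ α :=
  calc M l α ≤ M m α := hM.mono l m hl hlm α
    _ ≤ C * M μ α / R ^ (∑ i, α i) := (le_div_iff₀' (by positivity)).2 (h α)
    _ = C * R⁻¹ ^ (∑ i, α i) * M μ α := by rw [inv_pow]; ring

end WeightSystems

theorem eLpNorm_pdMulti_le_of_gsNorm_le {d : ℕ} {M : (Fin d → ℕ) → ℝ}
    {w : EuclideanSpace ℝ (Fin d) → ℝ} {q : ℝ≥0∞} {φ : EuclideanSpace ℝ (Fin d) → ℂ}
    {C : ℝ} (hC : 0 ≤ C) (h : gsNorm d M w q φ ≤ ENNReal.ofReal C) {α : Fin d → ℕ}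
    (hα : 0 < M α) :
    eLpNorm (fun x => ‖pdMulti d α φ x‖ * w x) q volume ≤ ENNReal.ofReal (C * M α) := by
  rw [ENNReal.ofReal_mul hC, ← ENNReal.div_le_iff (ENNReal.ofReal_pos.2 hα).ne'
    ENNReal.ofReal_ne_top]
  exact (le_iSup (fun α => eLpNorm (fun x => ‖pdMulti d α φ x‖ * w x) q volume /
    ENNReal.ofReal (M α)) α).trans h

theorem tsum_eLpNorm_pdMulti_le {d : ℕ} {M : (Fin d → ℕ) → ℝ}
    {u v : EuclideanSpace ℝ (Fin d) → ℝ} (hu : Continuous u) (hu_pos : ∀ x, 0 < u x)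
    (hv : Measurable v) (hv_nonneg : ∀ x, 0 ≤ v x)
    {φn : ℕ → EuclideanSpace ℝ (Fin d) → ℂ} (hsm : ∀ n, ContDiff ℝ (⊤ : ℕ∞) (φn n))
    {C : ℝ} (hC : 0 ≤ C) (hweak : ∀ (k : ℕ) (c : ℕ → ℂ), (∀ n, n ≤ k → ‖c n‖ ≤ 1) →
      gsNorm d M u ⊤ (fun x => ∑ n ∈ Finset.range (k + 1), c n * φn n x) ≤ ENNReal.ofReal C)
    {α : Fin d → ℕ} (hα : 0 < M α) :
    ∑' n, eLpNorm (fun x => ‖pdMulti d α (φn n) x‖ * v x) 1 volume ≤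
      ENNReal.ofReal (C * M α) * ∫⁻ x, ENNReal.ofReal (v x / u x) :=
  tsum_eLpNorm_one_mul_le (fun n => (contDiff_pdMulti α (hsm n)).continuous) hu hu_pos hv
    hv_nonneg (by positivity) fun k c hc => by
      simpa only [pdMulti_finset_sum _ _ α fun n _ => hsm n] using
        eLpNorm_pdMulti_le_of_gsNorm_le hC (hweak k c hc) hα

theorem stmt14_general (d : ℕ) (M : ℝ → (Fin d → ℕ) → ℝ) (w : ℝ → EuclideanSpace ℝ (Fin d) → ℝ)
    (hM : IsWSS d M) (hL : WSS_L_B d M)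
    (hW : IsWFS d w) (hN : WFS_N_B d w)
    (φn : ℕ → EuclideanSpace ℝ (Fin d) → ℂ) (hsm : ∀ n, ContDiff ℝ (⊤ : ℕ∞) (φn n))
    (hweak : ∀ l, 0 < l → ∃ C, 0 < C ∧ ∀ (k : ℕ) (c : ℕ → ℂ), (∀ n, n ≤ k → ‖c n‖ ≤ 1) →
      gsNorm d (M l) (w l) ⊤ (fun x => ∑ n ∈ Finset.range (k + 1), c n * φn n x) ≤
        ENNReal.ofReal C) :
    ∀ m, 0 < m → ∑' n : ℕ, gsNorm d (M m) (w m) 1 (φn n) < ⊤ := by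
  intro μ hμ
  obtain ⟨m, hm, C', hC', hLμ⟩ := hL 2 two_pos μ hμ
  obtain ⟨ν, hν, hint⟩ := hN μ hμ
  -- `l ≤ ν` makes `w μ / w l` integrable, `l ≤ m` gives `M l α ≤ C' 2^{-|α|} M μ α`
  set l := min ν m
  have hl : 0 < l := lt_min hν hm
  obtain ⟨C, hC, hweakl⟩ := hweak l hl
  set I := ∫⁻ x, ENNReal.ofReal (w μ x / w l x)
  have hI : I ≠ ∞ := hW.lintegral_ofReal_div_ne_top hμ hν hl (min_le_left _ _) hint
  refine ENNReal.tsum_iSup_lt_top_of_tsum_le_geometric _ (D := ENNReal.ofReal (C * C') * I)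
    (r := ENNReal.ofReal 2⁻¹) (ENNReal.mul_ne_top ENNReal.ofReal_ne_top hI)
    (ENNReal.ofReal_lt_one.2 (by norm_num)) fun α => ?_
  simp_rw [div_eq_mul_inv, ENNReal.tsum_mul_right, ← div_eq_mul_inv]
  refine ENNReal.div_le_of_le_mul ?_
  calc ∑' n, eLpNorm (fun x => ‖pdMulti d α (φn n) x‖ * w μ x) 1 volume
      ≤ ENNReal.ofReal (C * M l α) * I :=
        tsum_eLpNorm_pdMulti_le (hW.cont l hl) (hW.pos hl) (hW.cont μ hμ).measurable
          (fun x => (hW.pos hμ x).le) hsm hC.le hweakl (hM.pos l hl α)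
    _ ≤ ENNReal.ofReal (C * (C' * 2⁻¹ ^ (∑ i, α i) * M μ α)) * I := by
        gcongr
        exact hM.le_mul_inv_pow_mul two_pos hl (min_le_right _ _) hLμ α
    _ = ENNReal.ofReal (C * C') * I * ENNReal.ofReal 2⁻¹ ^ (∑ i, α i) *
          ENNReal.ofReal (M μ α) := by
        rw [← mul_assoc, ← mul_assoc, ENNReal.ofReal_mul (by positivity),
          ENNReal.ofReal_mul (by positivity), ENNReal.ofReal_pow (by norm_num)]
        ring

/-- Every weakly summable sequence in `𝒮^{(𝔐)}_{(𝒲),∞}` is absolutely summable (the key step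
in the proof of nuclearity of `𝒮^{(𝔐)}_{(𝒲)}` via Grothendieck's criterion). -/
theorem stmt14 (d : ℕ) (M : ℝ → (Fin d → ℕ) → ℝ) (w : ℝ → EuclideanSpace ℝ (Fin d) → ℝ)
    (hM : IsWSS d M) (hL : WSS_L_B d M) (hM2 : WSS_M2_B d M)
    (hW : IsWFS d w) (hwM : WFS_wM_B d w) (hN : WFS_N_B d w)
    (φn : ℕ → EuclideanSpace ℝ (Fin d) → ℂ) (hsm : ∀ n, ContDiff ℝ (⊤ : ℕ∞) (φn n))
    (hweak : ∀ l, 0 < l → ∃ C, 0 < C ∧ ∀ (k : ℕ) (c : ℕ → ℂ), (∀ n, n ≤ k → ‖c n‖ ≤ 1) →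
      gsNorm d (M l) (w l) ⊤ (fun x => ∑ n ∈ Finset.range (k + 1), c n * φn n x) ≤
        ENNReal.ofReal C) :
    ∀ m, 0 < m → ∑' n : ℕ, gsNorm d (M m) (w m) 1 (φn n) < ⊤ :=
  stmt14_general d M w hM hL hW hN φn hsm hweak
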